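/- Let n, B be positive integers, γ > 0, δ ≥ 0, and let λ1 ≥ λ2 ≥ … ≥ λ_d > 0. Define q(m, ρ) := 2nB(m + nδ)/γ − (Σ_{i=1}^d λ_i²)·m + (2 − ρ)m² and ϑ := 2 + 2nB(λ1² + nδ)/(γλ1⁴) − (Σ_{i=1}^d λ_i²)/λ1². If γ < γ̄ := 2nB(λ1² + nδ)/(λ1² Σ_{i=1}^d λ_i²), then q(λ_d², ϑ) ≥ (Σ_{i=1}^d λ_i²)·( (λ_d² + nδ)/(λ1² + nδ) · λ1² − λ_d² ) ≥ 0 = q(λ1², ϑ). -/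

import Mathlib

/-!
Write `a = λ₁²`, `b = λ_d²`, `c = nδ`, `T = Σ λᵢ²`. The value `ϑ` is chosen so that `q(·, ϑ)` vanishes
at `m = a`, and `γ < γ̄` is exactly `ϑ > 2`. Subtracting the middle term `T·c(a − b)/(a + c)` from
`q(b, ϑ)` leaves `(a − b)(ab + c(a + b))(ϑ − 2)/(a + c)`, which is nonnegative since `b ≤ a`.
-/

open Finset

/-- The auxiliary quadratic `q(m, ρ) = 2nB(m + nδ)/γ − T·m + (2 − ρ)m²`,
where `T = Σ_{i=1}^d λ_i²`. -/
noncomputable def qAux (n B : ℕ) (γ δ T m ρ : ℝ) : ℝ :=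
  2 * n * B * (m + n * δ) / γ - T * m + (2 - ρ) * m ^ 2

/-- The paper's `ϑ`, with `a` standing for `λ₁²`. -/
noncomputable def qAuxTheta (n B : ℕ) (γ δ T a : ℝ) : ℝ :=
  2 + 2 * n * B * (a + n * δ) / (γ * a ^ 2) - T / a

section

variable (n B : ℕ) {γ δ T a : ℝ}

theorem qAux_qAuxTheta_self (hγ : γ ≠ 0) (ha : a ≠ 0) :
    qAux n B γ δ T a (qAuxTheta n B γ δ T a) = 0 := by
  unfold qAux qAuxTheta
  field_simp
  ring

theorem qAux_qAuxTheta_sub (m : ℝ) (hγ : γ ≠ 0) (ha : a ≠ 0) (hac : a + n * δ ≠ 0) :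
    qAux n B γ δ T m (qAuxTheta n B γ δ T a) - T * ((m + n * δ) / (a + n * δ) * a - m) =
      (a - m) * (m * a + n * δ * (m + a)) * (qAuxTheta n B γ δ T a - 2) / (a + n * δ) := by
  unfold qAux qAuxTheta
  field_simp
  ring

theorem two_lt_qAuxTheta (hγ : 0 < γ) (ha : 0 < a) (hT : 0 < T)
    (h : γ < 2 * n * B * (a + n * δ) / (a * T)) : 2 < qAuxTheta n B γ δ T a := by
  rw [lt_div_iff₀ (by positivity)] at h
  have : T / a < 2 * n * B * (a + n * δ) / (γ * a ^ 2) := by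
    rw [div_lt_div_iff₀ ha (by positivity)]
    nlinarith
  unfold qAuxTheta
  linarith

end

theorem mul_div_mul_sub_nonneg {T a b c : ℝ} (hT : 0 ≤ T) (hc : 0 ≤ c) (hba : b ≤ a)
    (hac : 0 < a + c) : 0 ≤ T * ((b + c) / (a + c) * a - b) := by
  have h : (b + c) / (a + c) * a - b = c * (a - b) / (a + c) := by
    field_simp
    ring
  rw [h]
  exact mul_nonneg hT (div_nonneg (mul_nonneg hc (sub_nonneg.2 hba)) hac.le)

theorem qAux_endpoint_inequalities (n B d : ℕ) (hd : 0 < d)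
    (γ δ : ℝ) (hγ : 0 < γ) (hδ : 0 ≤ δ)
    (lam : Fin d → ℝ) (hpos : ∀ i, 0 < lam i)
    (hdec : ∀ i j : Fin d, i ≤ j → lam j ≤ lam i)
    (hbar : γ < 2 * n * B * ((lam ⟨0, hd⟩) ^ 2 + n * δ) /
      ((lam ⟨0, hd⟩) ^ 2 * ∑ i, lam i ^ 2)) :
    (∑ i, lam i ^ 2) *
        (((lam ⟨d - 1, by omega⟩) ^ 2 + n * δ) / ((lam ⟨0, hd⟩) ^ 2 + n * δ) * (lam ⟨0, hd⟩) ^ 2 -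
          (lam ⟨d - 1, by omega⟩) ^ 2) ≤
      qAux n B γ δ (∑ i, lam i ^ 2) ((lam ⟨d - 1, by omega⟩) ^ 2)
        (2 + 2 * n * B * ((lam ⟨0, hd⟩) ^ 2 + n * δ) / (γ * (lam ⟨0, hd⟩) ^ 4) -
          (∑ i, lam i ^ 2) / (lam ⟨0, hd⟩) ^ 2) ∧
    0 ≤ (∑ i, lam i ^ 2) *
        (((lam ⟨d - 1, by omega⟩) ^ 2 + n * δ) / ((lam ⟨0, hd⟩) ^ 2 + n * δ) * (lam ⟨0, hd⟩) ^ 2 -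
          (lam ⟨d - 1, by omega⟩) ^ 2) ∧
    qAux n B γ δ (∑ i, lam i ^ 2) ((lam ⟨0, hd⟩) ^ 2)
        (2 + 2 * n * B * ((lam ⟨0, hd⟩) ^ 2 + n * δ) / (γ * (lam ⟨0, hd⟩) ^ 4) -
          (∑ i, lam i ^ 2) / (lam ⟨0, hd⟩) ^ 2) = 0 := by
  have hθ : 2 + 2 * n * B * ((lam ⟨0, hd⟩) ^ 2 + n * δ) / (γ * (lam ⟨0, hd⟩) ^ 4) -
      (∑ i, lam i ^ 2) / (lam ⟨0, hd⟩) ^ 2 =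
      qAuxTheta n B γ δ (∑ i, lam i ^ 2) ((lam ⟨0, hd⟩) ^ 2) := by
    unfold qAuxTheta
    ring
  rw [hθ]
  set a := lam ⟨0, hd⟩ ^ 2
  set b := lam ⟨d - 1, by omega⟩ ^ 2
  set T := ∑ i, lam i ^ 2
  have ha : 0 < a := by positivity [hpos ⟨0, hd⟩]
  have hb : 0 < b := by positivity [hpos ⟨d - 1, by omega⟩]
  have hba : b ≤ a := pow_le_pow_left₀ (hpos _).le (hdec _ _ (Fin.mk_le_mk.2 (Nat.zero_le _))) 2
  have hT : 0 < T := sum_pos (fun i _ => by positivity [hpos i]) ⟨⟨0, hd⟩, mem_univ _⟩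
  have hc : (0 : ℝ) ≤ n * δ := by positivity
  have hac : 0 < a + n * δ := by positivity
  have hθ2 := two_lt_qAuxTheta n B hγ ha hT hbar
  refine ⟨?_, mul_div_mul_sub_nonneg hT.le hc hba hac,
    qAux_qAuxTheta_self n B hγ.ne' ha.ne'⟩
  have hgap := qAux_qAuxTheta_sub n B (T := T) b hγ.ne' ha.ne' hac.ne'
  have hgap_nonneg :
      0 ≤ (a - b) * (b * a + n * δ * (b + a)) * (qAuxTheta n B γ δ T a - 2) / (a + n * δ) := by
    have := sub_nonneg.2 hba
    have := sub_pos.2 hθ2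
    positivity
  linarith
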